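/- Let c_1, c_2, c_3, c_{12}, c_{13}, c_{23} be nonnegative real numbers satisfying c_1 + c_2 ≤ c_{12}, c_1 + c_3 ≤ c_{13}, and c_2 + c_3 ≤ c_{23}. Then the minimum of n_1 + n_2 + n_3 over all real triples (n_1, n_2, n_3) satisfying the Slepian–Wolf constraints n_1 ≥ c_1, n_2 ≥ c_2, n_3 ≥ c_3, n_1 + n_2 ≥ c_{12}, n_1 + n_3 ≥ c_{13}, n_2 + n_3 ≥ c_{23} exists and equals the maximum of the four quantities c_1 + c_{23}, c_2 + c_{13}, c_3 + c_{12}, and (c_{12} + c_{13} + c_{23})/2. -/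
import Mathlib


namespace AIT

open Classical

/-- Binary strings. -/
abbrev Str : Type := List Bool

/-- Conditional Kolmogorov complexity of `x` given `y`, relative to the machine `U`:
the length of a shortest program `p` with `U p y = x`. -/
noncomputable def Cc (U : Str → Str → Part Str) (x y : Str) : ℕ :=
  sInf { n : ℕ | ∃ p : Str, p.length = n ∧ x ∈ U p y }

/-- Plain (unconditional) Kolmogorov complexity: the condition is the empty string. -/
noncomputable def C0 (U : Str → Str → Part Str) (x : Str) : ℕ :=
  Cc U x []

/-- `U` is an optimal universal machine for conditional descriptions: it is partial
computable, total in the sense that every string has a description given any condition,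
and for every partial computable machine `M` there is a constant `cM` with
`C_U(x|y) ≤ C_M(x|y) + cM` whenever `x` has an `M`-description given `y`. -/
def Optimal (U : Str → Str → Part Str) : Prop :=
  Partrec₂ U ∧
  (∀ x y : Str, ∃ p : Str, x ∈ U p y) ∧
  (∀ M : Str → Str → Part Str, Partrec₂ M →
    ∃ cM : ℕ, ∀ x y : Str, (∃ p : Str, x ∈ M p y) → Cc U x y ≤ Cc M x y + cM)

/-- A fixed computable injective pairing of binary strings. -/
structure PairEnc where
  pair : Str → Str → Str
  inj : Function.Injective2 pair
  comp : Computable₂ pair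

/-- Mutual information `I(x:y) = C(x) + C(y) - C(x,y)`. -/
noncomputable def I2 (U : Str → Str → Part Str) (P : PairEnc) (x y : Str) : ℤ :=
  (C0 U x : ℤ) + C0 U y - C0 U (P.pair x y)

/-- Conditional mutual information `I(x:y|z) = C(x|z) + C(y|z) - C(x,y|z)`. -/
noncomputable def I2c (U : Str → Str → Part Str) (P : PairEnc) (x y z : Str) : ℤ :=
  (Cc U x z : ℤ) + Cc U y z - Cc U (P.pair x y) z

/-- A fixed computable injective encoding of natural numbers as binary strings. -/
def strOfNat (n : ℕ) : Str := Nat.bits n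

/-- A fixed computable injective encoding of an encodable type as binary strings. -/
def encode' {α : Type} [Encodable α] (a : α) : Str := Nat.bits (Encodable.encode a)

/-- Encoding of a list of strings as a single string, by iterating the pairing. -/
def encList (P : PairEnc) : List Str → Str
  | [] => []
  | x :: l => P.pair x (encList P l)

/-- The finite set of all binary strings of length `d`. -/
def binStrings (d : ℕ) : Finset Str :=
  Finset.image (fun f : Fin d → Bool => List.ofFn f) Finset.univ

/-- if `c₁, c₂, c₃, c₁₂, c₁₃, c₂₃ ≥ 0` satisfy `c₁ + c₂ ≤ c₁₂`,
`c₁ + c₃ ≤ c₁₃` and `c₂ + c₃ ≤ c₂₃`, then the minimum of `n₁ + n₂ + n₃` over real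
triples satisfying the Slepian–Wolf constraints exists and equals
`max (c₁ + c₂₃) (c₂ + c₁₃) (c₃ + c₁₂) ((c₁₂ + c₁₃ + c₂₃)/2)`. -/
theorem stmt16 (c₁ c₂ c₃ c₁₂ c₁₃ c₂₃ : ℝ)
    (h1 : 0 ≤ c₁) (h2 : 0 ≤ c₂) (h3 : 0 ≤ c₃)
    (h12 : 0 ≤ c₁₂) (h13 : 0 ≤ c₁₃) (h23 : 0 ≤ c₂₃)
    (hc12 : c₁ + c₂ ≤ c₁₂) (hc13 : c₁ + c₃ ≤ c₁₃) (hc23 : c₂ + c₃ ≤ c₂₃) :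
    IsLeast
      { s : ℝ | ∃ n₁ n₂ n₃ : ℝ, s = n₁ + n₂ + n₃ ∧
          c₁ ≤ n₁ ∧ c₂ ≤ n₂ ∧ c₃ ≤ n₃ ∧
          c₁₂ ≤ n₁ + n₂ ∧ c₁₃ ≤ n₁ + n₃ ∧ c₂₃ ≤ n₂ + n₃ }
      (max (c₁ + c₂₃) (max (c₂ + c₁₃) (max (c₃ + c₁₂) ((c₁₂ + c₁₃ + c₂₃) / 2)))) := by
  constructor
  · -- membership: exhibit an optimal feasible point
    rcases le_total (max (c₂ + c₁₃) (max (c₃ + c₁₂) ((c₁₂ + c₁₃ + c₂₃) / 2))) (c₁ + c₂₃)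
      with hA | hA
    · rw [max_eq_left hA]
      simp only [max_le_iff] at hA
      obtain ⟨hA1, hA2, hA3⟩ := hA
      rcases le_total c₂ (c₁₂ - c₁) with h | h
      · exact ⟨c₁, c₁₂ - c₁, c₂₃ - (c₁₂ - c₁), by ring, le_rfl, h, by linarith, by linarith,
          by linarith, by linarith⟩
      · exact ⟨c₁, c₂, c₂₃ - c₂, by ring, le_rfl, le_rfl, by linarith, by linarith,
          by linarith, by linarith⟩
    · rw [max_eq_right hA]
      rcases le_total (max (c₃ + c₁₂) ((c₁₂ + c₁₃ + c₂₃) / 2)) (c₂ + c₁₃) with hB | hB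
      · rw [max_eq_left hB]
        rw [max_eq_left hB] at hA
        simp only [max_le_iff] at hB
        obtain ⟨hB1, hB2⟩ := hB
        rcases le_total c₁ (c₁₂ - c₂) with h | h
        · exact ⟨c₁₂ - c₂, c₂, c₂ + c₁₃ - c₁₂, by ring, h, le_rfl, by linarith, by linarith,
            by linarith, by linarith⟩
        · exact ⟨c₁, c₂, c₁₃ - c₁, by ring, le_rfl, le_rfl, by linarith, by linarith,
            by linarith, by linarith⟩
      · rw [max_eq_right hB] at hA ⊢
        rcases le_total ((c₁₂ + c₁₃ + c₂₃) / 2) (c₃ + c₁₂) with hC | hC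
        · rw [max_eq_left hC]
          rw [max_eq_left hC] at hA hB
          rcases le_total c₁ (c₁₃ - c₃) with h | h
          · exact ⟨c₁₃ - c₃, c₃ + c₁₂ - c₁₃, c₃, by ring, h, by linarith, le_rfl, by linarith,
              by linarith, by linarith⟩
          · exact ⟨c₁, c₁₂ - c₁, c₃, by ring, le_rfl, by linarith, le_rfl, by linarith,
              by linarith, by linarith⟩
        · rw [max_eq_right hC]
          rw [max_eq_right hC] at hA hB
          exact ⟨(c₁₂ + c₁₃ - c₂₃) / 2, (c₁₂ + c₂₃ - c₁₃) / 2, (c₁₃ + c₂₃ - c₁₂) / 2, by ring,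
            by linarith, by linarith, by linarith, by linarith, by linarith, by linarith⟩
  · -- lower bound
    rintro s ⟨n₁, n₂, n₃, rfl, g1, g2, g3, g12, g13, g23⟩
    refine max_le (by linarith) (max_le (by linarith) (max_le (by linarith) (by linarith)))

end AIT
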